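/- Let 0 < α < 1/2 and let u, v be mean-zero functions in L²(T). Define T^{+,−}(u,v) as the bilinear operator with symbol bounded by ⟨ξ⟩^α/(⟨ξ+η⟩^{α+1}·⟨η⟩^{1−α}). Then ‖T^{+,−}(u,v)‖_{H¹(T)} ≲ ‖u‖_{L²}·‖v‖_{L²}, where one ingredient is the bound ‖⟨∇⟩^{−α}[v·⟨∇⟩^{2α−1}u]‖_{L²(T)} ≲ ‖u‖_{L²(T)}·‖v‖_{L²(T)}. -/

import Mathlib

/-!
With `n = ξ + η`, both multipliers (`⟨n⟩ |σ(ξ,η)|` and `⟨n⟩^{-α} ⟨η⟩^{2α-1}`) are bounded by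
`2 (⟨n⟩^{α-1} + ⟨η⟩^{α-1})`: this uses `⟨ξ⟩^α ≤ ⟨n⟩^α + ⟨η⟩^α` and that for nonpositive exponents
`N^a M^b ≤ min(N, M)^{a+b}`. As `α < 1/2`, the weight `W = ⟨·⟩^{α-1}` lies in `ℓ²(ℤ)`. The part
`W(n) (|û| * |v̂|)(n)` is bounded by `‖W‖₂ ‖û * v̂‖_∞ ≤ ‖W‖₂ ‖u‖₂ ‖v‖₂`, and the part `|û| * (W |v̂|)` by
Young's inequality `ℓ² * ℓ¹ → ℓ²` together with `‖W v̂‖₁ ≤ ‖W‖₂ ‖v‖₂`. The sums are manipulated in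
`ℝ≥0∞`, where no summability has to be tracked.
-/

noncomputable def jap (x : ℝ) : ℝ := Real.sqrt (1 + x^2)

/-- Bilinear operator at the level of Fourier coefficients: the `n`-th Fourier
coefficient is `∑_{ξ+η=n} σ(ξ,η) û(ξ) v̂(η)`. -/
noncomputable def Tcoef (σ : ℤ → ℤ → ℂ) (u v : ℤ → ℂ) (n : ℤ) : ℂ :=
  ∑' ξ : ℤ, σ ξ (n - ξ) * u ξ * v (n - ξ)

open ENNReal NNReal

lemma jap_pos (x : ℝ) : 0 < jap x := Real.sqrt_pos.2 (by positivity)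

lemma abs_le_jap (x : ℝ) : |x| ≤ jap x := by
  rw [jap, ← Real.sqrt_sq_eq_abs]
  exact Real.sqrt_le_sqrt (by linarith)

lemma jap_neg (x : ℝ) : jap (-x) = jap x := by rw [jap, jap, neg_sq]

lemma jap_add_le (x y : ℝ) : jap (x + y) ≤ jap x + jap y := by
  have hx : jap x ^ 2 = 1 + x ^ 2 := Real.sq_sqrt (by positivity)
  have hy : jap y ^ 2 = 1 + y ^ 2 := Real.sq_sqrt (by positivity)
  have hxy : x * y ≤ jap x * jap y := (le_abs_self _).trans <| by
    rw [abs_mul]; exact mul_le_mul (abs_le_jap x) (abs_le_jap y) (abs_nonneg y) (jap_pos x).le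
  refine Real.sqrt_le_iff.2 ⟨(add_pos (jap_pos x) (jap_pos y)).le, ?_⟩
  nlinarith

lemma summable_jap_rpow {p : ℝ} (hp : p < -1) : Summable fun n : ℤ => jap n ^ p := by
  refine Summable.of_norm_bounded_eventually (Real.summable_abs_int_rpow (b := -p) (by linarith)) ?_
  filter_upwards [Filter.eventually_cofinite_ne 0] with n hn
  rw [Real.norm_of_nonneg (Real.rpow_nonneg (jap_pos _).le _), neg_neg]
  exact Real.rpow_le_rpow_of_nonpos (abs_pos.2 (Int.cast_ne_zero.2 hn)) (abs_le_jap _) (by linarith)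

lemma tsum_ofReal_jap_rpow_sq {s : ℝ} (hs : s < -1 / 2) :
    ∑' n : ℤ, ENNReal.ofReal (jap n ^ s) ^ 2 = ENNReal.ofReal (∑' n : ℤ, jap n ^ (2 * s)) := by
  rw [ENNReal.ofReal_tsum_of_nonneg (fun n => Real.rpow_nonneg (jap_pos _).le _)
    (summable_jap_rpow (by linarith))]
  refine tsum_congr fun n => ?_
  rw [← ENNReal.ofReal_pow (Real.rpow_nonneg (jap_pos _).le _), ← Real.rpow_natCast,
    ← Real.rpow_mul (jap_pos _).le, Nat.cast_ofNat, mul_comm]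

lemma rpow_mul_rpow_le_add_of_nonpos {N M a b : ℝ} (hN : 0 < N) (hM : 0 < M) (ha : a ≤ 0)
    (hb : b ≤ 0) : N ^ a * M ^ b ≤ N ^ (a + b) + M ^ (a + b) := by
  rcases le_total N M with h | h
  · calc N ^ a * M ^ b ≤ N ^ a * N ^ b :=
          mul_le_mul_of_nonneg_left (Real.rpow_le_rpow_of_nonpos hN h hb) (by positivity)
      _ = N ^ (a + b) := (Real.rpow_add hN a b).symm
      _ ≤ _ := le_add_of_nonneg_right (by positivity)
  · calc N ^ a * M ^ b ≤ M ^ a * M ^ b :=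
          mul_le_mul_of_nonneg_right (Real.rpow_le_rpow_of_nonpos hM h ha) (by positivity)
      _ = M ^ (a + b) := (Real.rpow_add hM a b).symm
      _ ≤ _ := le_add_of_nonneg_left (by positivity)

lemma jap_rpow_neg_mul_jap_rpow_le {α : ℝ} (hα₀ : 0 ≤ α) (hα₁ : α ≤ 1 / 2) (s t : ℝ) :
    jap s ^ (-α) * jap t ^ (2 * α - 1) ≤ jap s ^ (α - 1) + jap t ^ (α - 1) := by
  have := rpow_mul_rpow_le_add_of_nonpos (jap_pos s) (jap_pos t) (neg_nonpos.2 hα₀)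
    (by linarith : 2 * α - 1 ≤ 0)
  rwa [show -α + (2 * α - 1) = α - 1 by ring] at this

lemma jap_mul_symbol_le {α : ℝ} (hα₀ : 0 ≤ α) (hα₁ : α ≤ 1 / 2) (x y : ℝ) :
    jap (x + y) * (jap x ^ α / (jap (x + y) ^ (α + 1) * jap y ^ (1 - α)))
      ≤ 2 * (jap (x + y) ^ (α - 1) + jap y ^ (α - 1)) := by
  set N := jap (x + y)
  set M := jap y
  have hN : 0 < N := jap_pos _
  have hM : 0 < M := jap_pos _
  have hx : jap x ≤ N + M := by simpa [jap_neg] using jap_add_le (x + y) (-y)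
  have hsub : jap x ^ α ≤ N ^ α + M ^ α :=
    (Real.rpow_le_rpow (jap_pos _).le hx hα₀).trans
      (Real.rpow_add_le_add_rpow hN.le hM.le hα₀ (by linarith))
  calc N * (jap x ^ α / (N ^ (α + 1) * M ^ (1 - α)))
      = jap x ^ α * (N ^ (-α) * M ^ (α - 1)) := by
        rw [Real.rpow_add hN, Real.rpow_sub hM, Real.rpow_neg hN.le, Real.rpow_sub_one hM.ne',
          Real.rpow_one, Real.rpow_one]
        field_simp
    _ ≤ (N ^ α + M ^ α) * (N ^ (-α) * M ^ (α - 1)) := by gcongr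
    _ = M ^ (α - 1) + N ^ (-α) * M ^ (2 * α - 1) := by
        rw [add_mul, ← mul_assoc, ← Real.rpow_add hN, add_neg_cancel, Real.rpow_zero, one_mul,
          mul_left_comm, ← Real.rpow_add hM]
        ring_nf
    _ ≤ M ^ (α - 1) + (N ^ (α - 1) + M ^ (α - 1)) := by
        gcongr; exact jap_rpow_neg_mul_jap_rpow_le hα₀ hα₁ _ _
    _ ≤ 2 * (N ^ (α - 1) + M ^ (α - 1)) := by
        linarith [Real.rpow_nonneg hN.le (α - 1)]

namespace ENNReal

lemma add_sq_le_two_mul (x y : ℝ≥0∞) : (x + y) ^ 2 ≤ 2 * (x ^ 2 + y ^ 2) := by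
  simpa [ENNReal.rpow_two, show (2 : ℝ) - 1 = 1 by norm_num] using
    ENNReal.rpow_add_le_mul_rpow_add_rpow x y one_le_two

lemma tsum_mul_sq_le {ι : Type*} (f g : ι → ℝ≥0∞) :
    (∑' i, f i * g i) ^ 2 ≤ (∑' i, f i ^ 2) * ∑' i, g i ^ 2 := by
  let _ : MeasurableSpace ι := ⊤
  have H := ENNReal.lintegral_mul_le_Lp_mul_Lq MeasureTheory.Measure.count
    Real.HolderConjugate.two_two
    measurable_from_top.aemeasurable measurable_from_top.aemeasurable (f := f) (g := g)
  simp only [Pi.mul_apply, MeasureTheory.lintegral_count, ENNReal.rpow_two] at H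
  calc _ ≤ ((∑' i, f i ^ 2) ^ (1 / 2 : ℝ) * (∑' i, g i ^ 2) ^ (1 / 2 : ℝ)) ^ 2 := by gcongr
    _ = _ := by
      rw [mul_pow, ← ENNReal.rpow_two, ← ENNReal.rpow_two, ← ENNReal.rpow_mul, ← ENNReal.rpow_mul]
      norm_num

lemma tsum_mul_sq_le_tsum_mul_tsum_mul_sq {ι : Type*} (w f : ι → ℝ≥0∞) :
    (∑' i, w i * f i) ^ 2 ≤ (∑' i, w i) * ∑' i, w i * f i ^ 2 := by
  have hw : ∀ i, (w i ^ (2⁻¹ : ℝ)) ^ 2 = w i := fun i => by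
    rw [← ENNReal.rpow_two, ENNReal.rpow_inv_rpow two_ne_zero]
  have := tsum_mul_sq_le (fun i => w i ^ (2⁻¹ : ℝ)) (fun i => w i ^ (2⁻¹ : ℝ) * f i)
  simpa only [mul_pow, hw, ← mul_assoc, ← sq] using this

section Convolution

variable {G : Type*} [AddGroup G]

lemma tsum_comp_sub_left (f : G → ℝ≥0∞) (n : G) : ∑' ξ, f (n - ξ) = ∑' ξ, f ξ :=
  (Equiv.subLeft n).tsum_eq f

lemma tsum_comp_sub_right (f : G → ℝ≥0∞) (ξ : G) : ∑' n, f (n - ξ) = ∑' n, f n :=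
  (Equiv.subRight ξ).tsum_eq f

lemma tsum_mul_sub_sq_le (a b : G → ℝ≥0∞) (n : G) :
    (∑' ξ, a ξ * b (n - ξ)) ^ 2 ≤ (∑' ξ, a ξ ^ 2) * ∑' ξ, b ξ ^ 2 := by
  simpa only [tsum_comp_sub_left (fun ξ => b ξ ^ 2)] using
    tsum_mul_sq_le a (fun ξ => b (n - ξ))

lemma tsum_sq_tsum_mul_sub_le (a c : G → ℝ≥0∞) :
    ∑' n, (∑' ξ, a ξ * c (n - ξ)) ^ 2 ≤ (∑' ξ, c ξ) ^ 2 * ∑' ξ, a ξ ^ 2 := by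
  calc ∑' n, (∑' ξ, a ξ * c (n - ξ)) ^ 2
      ≤ ∑' n, (∑' ξ, c ξ) * ∑' ξ, c (n - ξ) * a ξ ^ 2 := by
        gcongr with n
        simpa only [mul_comm (a _), tsum_comp_sub_left c] using
          tsum_mul_sq_le_tsum_mul_tsum_mul_sq (fun ξ => c (n - ξ)) a
    _ = (∑' ξ, c ξ) * ∑' ξ, (∑' n, c (n - ξ)) * a ξ ^ 2 := by
        rw [ENNReal.tsum_mul_left, ENNReal.tsum_comm]
        simp only [ENNReal.tsum_mul_right]
    _ = _ := by
        simp only [tsum_comp_sub_right c, ENNReal.tsum_mul_left]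
        ring

lemma tsum_sq_le_of_le_tsum_add_weight (W a b F : G → ℝ≥0∞) (K : ℝ≥0∞)
    (hF : ∀ n, F n ≤ K * ∑' ξ, (W n + W (n - ξ)) * a ξ * b (n - ξ)) :
    ∑' n, F n ^ 2 ≤ 4 * K ^ 2 * (∑' n, W n ^ 2) * (∑' n, a n ^ 2) * ∑' n, b n ^ 2 := by
  set X := fun n => W n * ∑' ξ, a ξ * b (n - ξ)
  set Y := fun n => ∑' ξ, a ξ * (W (n - ξ) * b (n - ξ))
  have hsplit : ∀ n, F n ≤ K * (X n + Y n) := fun n => (hF n).trans_eq <| by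
    simp only [X, Y, ← ENNReal.tsum_mul_left, ← ENNReal.tsum_add]
    congr 2 with ξ
    ring
  have hX : ∑' n, X n ^ 2 ≤ (∑' n, W n ^ 2) * ((∑' n, a n ^ 2) * ∑' n, b n ^ 2) := by
    calc ∑' n, X n ^ 2 ≤ ∑' n, W n ^ 2 * ((∑' n, a n ^ 2) * ∑' n, b n ^ 2) := by
          gcongr with n
          rw [mul_pow]
          gcongr
          exact tsum_mul_sub_sq_le a b n
      _ = _ := ENNReal.tsum_mul_right
  have hY : ∑' n, Y n ^ 2 ≤ (∑' n, W n ^ 2) * (∑' n, b n ^ 2) * ∑' n, a n ^ 2 :=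
    (tsum_sq_tsum_mul_sub_le a fun m => W m * b m).trans (by gcongr; exact tsum_mul_sq_le W b)
  calc ∑' n, F n ^ 2 ≤ ∑' n, K ^ 2 * (2 * (X n ^ 2 + Y n ^ 2)) := by
        gcongr with n
        calc F n ^ 2 ≤ (K * (X n + Y n)) ^ 2 := by gcongr; exact hsplit n
          _ ≤ _ := by rw [mul_pow]; gcongr; exact add_sq_le_two_mul _ _
    _ = 2 * K ^ 2 * (∑' n, X n ^ 2 + ∑' n, Y n ^ 2) := by
        rw [ENNReal.tsum_mul_left, ENNReal.tsum_mul_left, ENNReal.tsum_add]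
        ring
    _ ≤ 2 * K ^ 2 * ((∑' n, W n ^ 2) * ((∑' n, a n ^ 2) * ∑' n, b n ^ 2) +
          (∑' n, W n ^ 2) * (∑' n, b n ^ 2) * ∑' n, a n ^ 2) := by gcongr
    _ = _ := by ring

end Convolution

end ENNReal

lemma tsum_enorm_sq_eq_ofReal {ι E : Type*} [SeminormedAddGroup E] {u : ι → E}
    (hu : Summable fun i => ‖u i‖ ^ 2) :
    ∑' i, ‖u i‖ₑ ^ 2 = ENNReal.ofReal (∑' i, ‖u i‖ ^ 2) := by
  rw [ENNReal.ofReal_tsum_of_nonneg (fun i => by positivity) hu]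
  simp only [← ofReal_norm, ENNReal.ofReal_pow (norm_nonneg _)]

lemma tsum_le_of_tsum_ofReal_le {ι : Type*} {f : ι → ℝ} (hf : ∀ i, 0 ≤ f i) {B : ℝ} (hB : 0 ≤ B)
    (h : ∑' i, ENNReal.ofReal (f i) ≤ ENNReal.ofReal B) : ∑' i, f i ≤ B := by
  calc ∑' i, f i = ∑' i, (ENNReal.ofReal (f i)).toReal := by
        simp only [ENNReal.toReal_ofReal (hf _)]
    _ = (∑' i, ENNReal.ofReal (f i)).toReal :=
        (ENNReal.tsum_toReal_eq fun _ => ENNReal.ofReal_ne_top).symm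
    _ ≤ B := ENNReal.toReal_le_of_le_ofReal hB h

lemma ofReal_mul_norm_tsum_le {ι E : Type*} [NormedAddCommGroup E] {w : ℝ} (hw : 0 ≤ w)
    (f : ι → E) {g : ι → ℝ≥0∞} (h : ∀ i, ENNReal.ofReal w * ‖f i‖ₑ ≤ g i) :
    ENNReal.ofReal (w * ‖∑' i, f i‖) ≤ ∑' i, g i := by
  rw [ENNReal.ofReal_mul hw, ofReal_norm]
  calc _ ≤ ENNReal.ofReal w * ∑' i, ‖f i‖ₑ := by gcongr; exact enorm_tsum_le_tsum_enorm
    _ = ∑' i, ENNReal.ofReal w * ‖f i‖ₑ := ENNReal.tsum_mul_left.symm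
    _ ≤ _ := ENNReal.tsum_le_tsum h

lemma sqrt_tsum_sq_le_of_le_tsum_add_weight {φ : ℤ → ℝ} (hφ : ∀ n, 0 ≤ φ n) {u v : ℤ → ℂ}
    (hu : Summable fun n => ‖u n‖ ^ 2) (hv : Summable fun n => ‖v n‖ ^ 2)
    {W : ℤ → ℝ≥0∞} {S : ℝ} (hS : 0 ≤ S) (hW : ∑' n, W n ^ 2 = ENNReal.ofReal S) (K : ℝ≥0)
    (h : ∀ n, ENNReal.ofReal (φ n) ≤ K * ∑' ξ, (W n + W (n - ξ)) * ‖u ξ‖ₑ * ‖v (n - ξ)‖ₑ) :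
    √(∑' n, φ n ^ 2) ≤ 2 * K * √S * √(∑' n, ‖u n‖ ^ 2) * √(∑' n, ‖v n‖ ^ 2) := by
  set U := ∑' n, ‖u n‖ ^ 2
  set V := ∑' n, ‖v n‖ ^ 2
  have hU : 0 ≤ U := tsum_nonneg fun n => by positivity
  have hV : 0 ≤ V := tsum_nonneg fun n => by positivity
  have hsum : ∑' n, φ n ^ 2 ≤ 4 * K ^ 2 * S * U * V := by
    refine tsum_le_of_tsum_ofReal_le (fun n => sq_nonneg _) (by positivity) ?_
    have := ENNReal.tsum_sq_le_of_le_tsum_add_weight W (fun ξ => ‖u ξ‖ₑ) (fun ξ => ‖v ξ‖ₑ) _ _ h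
    rw [hW, tsum_enorm_sq_eq_ofReal hu, tsum_enorm_sq_eq_ofReal hv] at this
    simp only [ENNReal.ofReal_pow (hφ _)]
    refine this.trans_eq ?_
    rw [ENNReal.ofReal_mul (by positivity), ENNReal.ofReal_mul (by positivity),
      ENNReal.ofReal_mul (by positivity), ENNReal.ofReal_mul (by positivity),
      ENNReal.ofReal_pow K.coe_nonneg, ENNReal.ofReal_coe_nnreal, ENNReal.ofReal_ofNat]
  calc √(∑' n, φ n ^ 2) ≤ √((2 * K * √S * √U * √V) ^ 2) := by
        refine Real.sqrt_le_sqrt (hsum.trans_eq ?_)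
        simp only [mul_pow, Real.sq_sqrt hS, Real.sq_sqrt hU, Real.sq_sqrt hV]
        ring
    _ = _ := Real.sqrt_sq (by positivity)

lemma ofReal_jap_mul_norm_Tcoef_le {α : ℝ} (hα₀ : 0 ≤ α) (hα₁ : α ≤ 1 / 2) {σ : ℤ → ℤ → ℂ}
    (hσ : ∀ ξ η : ℤ, ‖σ ξ η‖ ≤ jap ξ ^ α / (jap ((ξ : ℝ) + η) ^ (α + 1) * jap η ^ (1 - α)))
    (u v : ℤ → ℂ) (n : ℤ) :
    ENNReal.ofReal (jap n * ‖Tcoef σ u v n‖) ≤ 2 * ∑' ξ,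
      (ENNReal.ofReal (jap n ^ (α - 1)) + ENNReal.ofReal (jap (n - ξ : ℤ) ^ (α - 1))) *
        ‖u ξ‖ₑ * ‖v (n - ξ)‖ₑ := by
  rw [← ENNReal.tsum_mul_left]
  refine ofReal_mul_norm_tsum_le (jap_pos _).le _ fun ξ => ?_
  have hn : (ξ : ℝ) + ((n - ξ : ℤ) : ℝ) = n := by push_cast; ring
  have hsymb : jap n * ‖σ ξ (n - ξ)‖ ≤ 2 * (jap n ^ (α - 1) + jap (n - ξ : ℤ) ^ (α - 1)) := by
    have := jap_mul_symbol_le hα₀ hα₁ ξ (n - ξ : ℤ)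
    rw [hn] at this
    refine (mul_le_mul_of_nonneg_left ?_ (jap_pos _).le).trans this
    simpa only [hn] using hσ ξ (n - ξ)
  calc ENNReal.ofReal (jap n) * ‖σ ξ (n - ξ) * u ξ * v (n - ξ)‖ₑ
      = ENNReal.ofReal (jap n * ‖σ ξ (n - ξ)‖) * (‖u ξ‖ₑ * ‖v (n - ξ)‖ₑ) := by
        rw [enorm_mul, enorm_mul, ENNReal.ofReal_mul (jap_pos _).le, ofReal_norm]
        ring
    _ ≤ ENNReal.ofReal (2 * (jap n ^ (α - 1) + jap (n - ξ : ℤ) ^ (α - 1))) *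
          (‖u ξ‖ₑ * ‖v (n - ξ)‖ₑ) := by gcongr
    _ = _ := by
        rw [ENNReal.ofReal_mul zero_le_two, ENNReal.ofReal_ofNat,
          ENNReal.ofReal_add (Real.rpow_nonneg (jap_pos _).le _)
            (Real.rpow_nonneg (jap_pos _).le _)]
        ring

lemma ofReal_norm_jap_rpow_mul_tsum_le {α : ℝ} (hα₀ : 0 ≤ α) (hα₁ : α ≤ 1 / 2) (u v : ℤ → ℂ)
    (n : ℤ) :
    ENNReal.ofReal ‖(jap n ^ (-α) : ℝ) *
        (∑' ξ : ℤ, v ξ * ((jap ((n : ℝ) - ξ) ^ (2 * α - 1) : ℝ) * u (n - ξ)))‖ ≤ ∑' ξ,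
      (ENNReal.ofReal (jap n ^ (α - 1)) + ENNReal.ofReal (jap (n - ξ : ℤ) ^ (α - 1))) *
        ‖v ξ‖ₑ * ‖u (n - ξ)‖ₑ := by
  rw [norm_mul, Complex.norm_real, Real.norm_of_nonneg (Real.rpow_nonneg (jap_pos _).le _)]
  refine ofReal_mul_norm_tsum_le (Real.rpow_nonneg (jap_pos _).le _) _ fun ξ => ?_
  have hr : 0 ≤ jap ((n : ℝ) - ξ) ^ (2 * α - 1) := Real.rpow_nonneg (jap_pos _).le _
  calc ENNReal.ofReal (jap n ^ (-α)) * ‖v ξ * ((jap ((n : ℝ) - ξ) ^ (2 * α - 1) : ℝ) * u (n - ξ))‖ₑ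
      = ENNReal.ofReal (jap n ^ (-α) * jap ((n : ℝ) - ξ) ^ (2 * α - 1)) *
          (‖v ξ‖ₑ * ‖u (n - ξ)‖ₑ) := by
        rw [enorm_mul, enorm_mul, 
          ← ofReal_norm ((jap ((n : ℝ) - ξ) ^ (2 * α - 1) : ℝ) : ℂ), Complex.norm_real,
          Real.norm_of_nonneg hr, ENNReal.ofReal_mul (Real.rpow_nonneg (jap_pos _).le _)]
        ring
    _ ≤ ENNReal.ofReal (jap n ^ (α - 1) + jap ((n : ℝ) - ξ) ^ (α - 1)) *
          (‖v ξ‖ₑ * ‖u (n - ξ)‖ₑ) := by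
        gcongr; exact jap_rpow_neg_mul_jap_rpow_le hα₀ hα₁ _ _
    _ = _ := by
        rw [ENNReal.ofReal_add (Real.rpow_nonneg (jap_pos _).le _)
          (Real.rpow_nonneg (jap_pos _).le _), Int.cast_sub]
        ring

theorem TPM_L2_L2_to_H1 (α : ℝ) (hα : 0 < α) (hα' : α < 1/2) :
    ∃ C : ℝ, 0 < C ∧
      -- the `H¹ × H¹ → L²` bound for `T^{+,-}`
      (∀ (σ : ℤ → ℤ → ℂ) (u v : ℤ → ℂ),
        u 0 = 0 → v 0 = 0 →
        Summable (fun n => ‖u n‖^2) → Summable (fun n => ‖v n‖^2) →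
        (∀ ξ η : ℤ, ξ * η * (ξ + η) = 0 → σ ξ η = 0) →
        (∀ ξ η : ℤ, ‖σ ξ η‖ ≤
            jap ξ ^ α / (jap ((ξ : ℝ) + η) ^ (α + 1) * jap η ^ (1 - α))) →
        Real.sqrt (∑' n : ℤ, jap n ^ 2 * ‖Tcoef σ u v n‖^2)
          ≤ C * Real.sqrt (∑' n : ℤ, ‖u n‖^2) * Real.sqrt (∑' n : ℤ, ‖v n‖^2)) ∧
      -- the ingredient: `‖⟨∇⟩^{-α}[v ⟨∇⟩^{2α-1}u]‖_{L²} ≲ ‖u‖_{L²} ‖v‖_{L²}`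
      (∀ (u v : ℤ → ℂ),
        Summable (fun n => ‖u n‖^2) → Summable (fun n => ‖v n‖^2) →
        Real.sqrt (∑' n : ℤ, ‖(jap n ^ (-α) : ℝ) *
            (∑' ξ : ℤ, v ξ * ((jap ((n : ℝ) - ξ) ^ (2*α - 1) : ℝ) * u (n - ξ)))‖^2)
          ≤ C * Real.sqrt (∑' n : ℤ, ‖u n‖^2) * Real.sqrt (∑' n : ℤ, ‖v n‖^2)) := by
  set S := ∑' n : ℤ, jap n ^ (2 * (α - 1))
  have hS : 0 < S := (summable_jap_rpow (by linarith)).tsum_pos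
    (fun n => Real.rpow_nonneg (jap_pos _).le _) 0 (Real.rpow_pos_of_pos (jap_pos _) _)
  have hW := tsum_ofReal_jap_rpow_sq (s := α - 1) (by linarith)
  refine ⟨4 * √S, by positivity, fun σ u v _ _ hu hv _ hσ => ?_, fun u v hu hv => ?_⟩
  · simp only [← mul_pow]
    refine (sqrt_tsum_sq_le_of_le_tsum_add_weight
      (fun n => mul_nonneg (jap_pos _).le (norm_nonneg _)) hu hv hS.le hW 2
      fun n => by exact_mod_cast ofReal_jap_mul_norm_Tcoef_le hα.le hα'.le hσ u v n).trans_eq ?_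
    push_cast
    ring
  · refine (sqrt_tsum_sq_le_of_le_tsum_add_weight (fun n => norm_nonneg _) hv hu hS.le hW 1
      fun n => by simpa only [ENNReal.coe_one, one_mul] using
        ofReal_norm_jap_rpow_mul_tsum_le hα.le hα'.le u v n).trans ?_
    have : 0 ≤ √S * √(∑' n : ℤ, ‖u n‖^2) * √(∑' n : ℤ, ‖v n‖^2) := by positivity
    push_cast
    linarith
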